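/- arXiv:2605.12903 — 13 statements merged into one kernel-verified Lean document; each statement's English description precedes it below -/
import Mathlib

section
/- Let K be a field, let f, g ∈ K[x] with g nonconstant, and let h be an element of the field of rational functions K(X) such that evaluating g at h gives the image of f in K(X) (i.e., aeval h g = algebraMap K[X] K(X) f). Then h is a polynomial: there exists h₀ ∈ K[x] whose image in K(X) equals h, and consequently f = g.comp h₀. -/
open Polynomial

/-! `h` is a root of `g(T) - f ∈ K[X][T]`, whose leading coefficient is the unit `C g.leadingCoeff`,
so `h` is integral over `K[X]`; as `K[X]` is integrally closed in its fraction field, `h ∈ K[X]`. -/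

lemma leadingCoeff_map_C_sub_C {R : Type*} [CommRing R] (f g : R[X]) (hg : 0 < g.natDegree) :
    (g.map C - C f).leadingCoeff = C g.leadingCoeff := by
  have hdeg : (C f).degree < (g.map C).degree := by
    rw [degree_map_eq_of_injective C_injective]
    exact degree_C_le.trans_lt (natDegree_pos_iff_degree_pos.mp hg)
  rw [leadingCoeff_sub_of_degree_lt hdeg, leadingCoeff_map_of_injective C_injective]

lemma isIntegral_of_aeval_eq_algebraMap {R A : Type*} [CommRing R] [CommRing A] [Algebra R A]
    [Algebra R[X] A] [IsScalarTower R R[X] A] {f g : R[X]} (hg : 0 < g.natDegree)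
    (hu : IsUnit g.leadingCoeff) {x : A} (hx : aeval x g = algebraMap R[X] A f) :
    IsIntegral R[X] x := by
  refine ⟨(g.map C - C f) * C (C (↑hu.unit⁻¹ : R)), ?_, ?_⟩
  · refine monic_mul_C_of_leadingCoeff_mul_eq_one ?_
    rw [leadingCoeff_map_C_sub_C f g hg, ← C_mul, IsUnit.mul_val_inv, C_1]
  · have hmap : aeval x (g.map C) = aeval x g := by
      rw [← Polynomial.algebraMap_eq, aeval_map_algebraMap]
    rw [← aeval_def, map_mul, map_sub, hmap, hx, aeval_C, sub_self, zero_mul]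

theorem stmt_0 (K : Type*) [Field K] (f g : K[X]) (hg : 0 < g.natDegree)
    (h : RatFunc K) (hfg : Polynomial.aeval h g = algebraMap K[X] (RatFunc K) f) :
    ∃ h₀ : K[X], algebraMap K[X] (RatFunc K) h₀ = h ∧ f = g.comp h₀ := by
  have hu : IsUnit g.leadingCoeff :=
    (leadingCoeff_ne_zero.mpr (ne_zero_of_natDegree_gt hg)).isUnit
  obtain ⟨h₀, rfl⟩ :=
    IsIntegrallyClosed.isIntegral_iff.mp (isIntegral_of_aeval_eq_algebraMap hg hu hfg)
  refine ⟨h₀, rfl, IsFractionRing.injective K[X] (RatFunc K) ?_⟩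
  rw [← hfg, aeval_algebraMap_apply, comp_eq_aeval]
end

section
/- Let K be a field and let f, g ∈ K[x] with g nonconstant. Then the set 𝓗_{f,g}(K) = {h ∈ K[x] : f = g.comp h} is finite, and its cardinality is at most natDegree g. -/
open Polynomial

theorem stmt_1 (K : Type*) [Field K] (f g : K[X]) (hg : 0 < g.natDegree) :
    {h : K[X] | f = g.comp h}.Finite ∧ {h : K[X] | f = g.comp h}.ncard ≤ g.natDegree := by
  classical
  set P : Polynomial (K[X]) := g.map (C : K →+* K[X]) - C f with hP
  have hmapdeg : (g.map (C : K →+* K[X])).natDegree = g.natDegree :=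
    natDegree_map_eq_of_injective (C_injective) g
  have hPdeg : P.natDegree = g.natDegree := by
    rw [hP, natDegree_sub_C, hmapdeg]
  have hP0 : P ≠ 0 := by
    intro h
    rw [h, natDegree_zero] at hPdeg
    omega
  have hroot : ∀ h : K[X], f = g.comp h ↔ P.IsRoot h := by
    intro h
    simp only [hP, IsRoot, eval_sub, eval_map, eval_C, comp]
    constructor
    · intro he; rw [← he]; ring
    · intro he; exact (sub_eq_zero.mp he).symm
  have hsub : {h : K[X] | f = g.comp h} ⊆ (P.roots.toFinset : Set K[X]) := by
    intro h hh
    simp only [Multiset.mem_toFinset, Finset.coe_sort_coe, Finset.mem_coe,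
      mem_roots hP0]
    exact (hroot h).mp hh
  have hfin : {h : K[X] | f = g.comp h}.Finite :=
    Set.Finite.subset (P.roots.toFinset : Finset K[X]).finite_toSet hsub
  refine ⟨hfin, ?_⟩
  calc {h : K[X] | f = g.comp h}.ncard ≤ P.roots.toFinset.card :=
        Set.ncard_le_ncard hsub (P.roots.toFinset.finite_toSet) |>.trans
          (le_of_eq (Set.ncard_coe_finset _))
    _ ≤ Multiset.card P.roots := Multiset.toFinset_card_le _
    _ ≤ P.natDegree := P.card_roots'
    _ = g.natDegree := hPdeg
end

section
/- (Engstrom cancellation in equal outer degree.) Let k be a field of characteristic zero and let P, Q, R, S ∈ k[x] be nonconstant polynomials satisfying P.comp Q = R.comp S and natDegree P = natDegree R. Then there exist a ∈ k with a ≠ 0 and b ∈ k such that P = R.comp (C a * X + C b) and S = C a * Q + C b. -/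
/-!
Comparing degrees gives `deg S = deg Q = n`, so `S = a Q + U` with `a ≠ 0` and `deg U = d < n`.
The Taylor expansion `R(V + U) = ∑ⱼ (Dⱼ R)(V) Uʲ` (Hasse derivatives) shows that, in
characteristic zero, `R(aQ + U) - R(aQ)` has degree exactly `(deg R - 1) n + d`, carried by the
term `R'(aQ) U`. But this difference equals `(P - R(aX)) ∘ Q`, whose degree is a multiple of `n`.
Hence `n ∣ d`, so `d = 0`: `U` is a constant `b`, and cancelling `Q` on the right in
`P ∘ Q = R ∘ (aX + b) ∘ Q` gives `P = R ∘ (aX + b)`.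
-/

open Polynomial Finset

namespace Polynomial

theorem hasseDeriv_map {R S : Type*} [Semiring R] [Semiring S] (g : R →+* S) (j : ℕ)
    (f : R[X]) :
    hasseDeriv j (f.map g) = (hasseDeriv j f).map g := by
  ext1 n
  simp [hasseDeriv_coeff, coeff_map]

theorem comp_add_eq_sum_hasseDeriv_comp {R : Type*} [CommSemiring R] (f p q : R[X]) :
    f.comp (p + q) = ∑ j ∈ range (f.natDegree + 1), (hasseDeriv j f).comp p * q ^ j := by
  -- Taylor expansion around `p` of `f` viewed as a polynomial over `R[X]`, evaluated at `q`.
  have := eval_eq_sum_range (p := taylor p (f.map C)) q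
  rw [taylor_eval, natDegree_taylor, natDegree_map_eq_of_injective C_injective] at this
  simp only [taylor_coeff, hasseDeriv_map, eval_map] at this
  rw [comp, add_comm, this]
  rfl

theorem natDegree_comp_add_sub_comp {R : Type*} [CommRing R] [IsDomain R] [CharZero R]
    {f p q : R[X]} (hf : 0 < f.natDegree) (hq : q ≠ 0) (hqp : q.natDegree < p.natDegree) :
    (f.comp (p + q) - f.comp p).natDegree = (f.natDegree - 1) * p.natDegree + q.natDegree := by
  obtain ⟨m, hm⟩ : ∃ m, f.natDegree = m + 1 := Nat.exists_eq_succ_of_ne_zero hf.ne'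
  have hexp : f.comp (p + q) - f.comp p = (derivative f).comp p * q +
      ∑ j ∈ range m, (hasseDeriv (j + 2) f).comp p * q ^ (j + 2) := by
    rw [comp_add_eq_sum_hasseDeriv_comp, hm, sum_range_succ', sum_range_succ']
    simp only [hasseDeriv_zero', hasseDeriv_one', zero_add, pow_zero, pow_one, mul_one]
    ring
  have hlead_ne : (derivative f).comp p * q ≠ 0 := by
    refine mul_ne_zero ?_ hq
    rw [← leadingCoeff_ne_zero, leadingCoeff_comp (by omega)]
    exact mul_ne_zero (leadingCoeff_ne_zero.2 (derivative_ne_zero.2 hf.ne'))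
      (pow_ne_zero _ (leadingCoeff_ne_zero.2 (ne_zero_of_natDegree_gt hqp)))
  have hlead : ((derivative f).comp p * q).natDegree = m * p.natDegree + q.natDegree := by
    rw [natDegree_mul (left_ne_zero_of_mul hlead_ne) hq, natDegree_comp, natDegree_derivative, hm,
      Nat.add_sub_cancel]
  have htail : (∑ j ∈ range m, (hasseDeriv (j + 2) f).comp p * q ^ (j + 2)).degree <
      ((derivative f).comp p * q).degree := by
    refine (degree_sum_le _ _).trans_lt
      ((Finset.sup_lt_iff (bot_lt_iff_ne_bot.2 (degree_eq_bot.not.2 hlead_ne))).2 fun j hj => ?_)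
    refine degree_lt_degree (natDegree_mul_le.trans_lt ?_)
    rw [natDegree_comp, natDegree_hasseDeriv, hlead, hm]
    have hj : j < m := mem_range.1 hj
    have hpow : (q ^ (j + 2)).natDegree ≤ (j + 2) * q.natDegree := natDegree_pow_le
    obtain ⟨s, rfl⟩ := Nat.exists_eq_add_of_lt hj
    have hs : j + s + 1 + 1 - (j + 2) = s := by omega
    rw [hs]
    nlinarith
  rw [hexp, natDegree_add_eq_left_of_degree_lt htail, hlead, hm, Nat.add_sub_cancel]

theorem comp_left_injective {R : Type*} [Ring R] [NoZeroDivisors R] {q : R[X]}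
    (hq : 0 < q.natDegree) : Function.Injective fun p : R[X] => p.comp q := by
  intro p p' h
  have hsub : (p - p').comp q = 0 := by rw [sub_comp]; exact sub_eq_zero.2 h
  rcases comp_eq_zero_iff.1 hsub with hpp' | ⟨-, hqC⟩
  · exact sub_eq_zero.1 hpp'
  · rw [hqC, natDegree_C] at hq
    exact absurd hq (lt_irrefl 0)

theorem exists_natDegree_sub_C_mul_lt {K : Type*} [Field K] {p q : K[X]}
    (hq : 0 < q.natDegree) (hpq : p.natDegree = q.natDegree) :
    ∃ a : K, a ≠ 0 ∧ (p - C a * q).natDegree < q.natDegree := by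
  have hq0 : q ≠ 0 := ne_zero_of_natDegree_gt hq
  have hp0 : p ≠ 0 := ne_zero_of_natDegree_gt (hpq ▸ hq)
  set a := p.leadingCoeff / q.leadingCoeff
  have ha : a ≠ 0 := div_ne_zero (leadingCoeff_ne_zero.2 hp0) (leadingCoeff_ne_zero.2 hq0)
  refine ⟨a, ha, ?_⟩
  rcases eq_or_ne (p - C a * q) 0 with h0 | h0
  · rwa [h0, natDegree_zero]
  have hlc : (C a * q).leadingCoeff = p.leadingCoeff := by
    rw [leadingCoeff_mul, leadingCoeff_C, div_mul_cancel₀ _ (leadingCoeff_ne_zero.2 hq0)]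
  have hdeg : p.degree = (C a * q).degree := by
    rw [degree_C_mul ha, degree_eq_natDegree hp0, degree_eq_natDegree hq0, hpq]
  rw [← hpq]
  exact natDegree_lt_natDegree h0 (degree_sub_lt_left hdeg hp0 hlc.symm)

end Polynomial

theorem stmt_2_general (k : Type*) [Field k] [CharZero k] (P Q R S : k[X])
    (hQ : 0 < Q.natDegree) (hR : 0 < R.natDegree)
    (h : P.comp Q = R.comp S) (hdeg : P.natDegree = R.natDegree) :
    ∃ a b : k, a ≠ 0 ∧ P = R.comp (C a * X + C b) ∧ S = C a * Q + C b := by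
  have hSQ : S.natDegree = Q.natDegree := by
    have := congrArg natDegree h
    rw [natDegree_comp, natDegree_comp, hdeg] at this
    exact (Nat.eq_of_mul_eq_mul_left hR this).symm
  obtain ⟨a, ha, hU⟩ := exists_natDegree_sub_C_mul_lt hQ hSQ
  set U := S - C a * Q with hU_def
  have hU_const : U.natDegree = 0 := by
    rcases eq_or_ne U 0 with hU0 | hU0
    · rw [hU0, natDegree_zero]
    have hdiff : R.comp (C a * Q + U) - R.comp (C a * Q) = (P - R.comp (C a * X)).comp Q := by
      rw [sub_comp, comp_assoc, h, hU_def, add_sub_cancel, mul_comp, C_comp, X_comp]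
    have hdvd := dvd_mul_left Q.natDegree (P - R.comp (C a * X)).natDegree
    have hUaQ : U.natDegree < (C a * Q).natDegree := by rwa [natDegree_C_mul ha]
    rw [← natDegree_comp, ← hdiff, natDegree_comp_add_sub_comp hR hU0 hUaQ, natDegree_C_mul ha,
      Nat.dvd_add_right (dvd_mul_left _ _)] at hdvd
    exact Nat.eq_zero_of_dvd_of_lt hdvd hU
  have hS_eq : S = C a * Q + C (U.coeff 0) := by
    rw [← eq_C_of_natDegree_eq_zero hU_const, hU_def, add_sub_cancel]
  refine ⟨a, U.coeff 0, ha, comp_left_injective hQ ?_, hS_eq⟩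
  simp only [comp_assoc, add_comp, mul_comp, C_comp, X_comp, ← hS_eq, h]

theorem stmt_2 (k : Type*) [Field k] [CharZero k] (P Q R S : k[X])
    (hP : 0 < P.natDegree) (hQ : 0 < Q.natDegree) (hR : 0 < R.natDegree)
    (hS : 0 < S.natDegree) (h : P.comp Q = R.comp S) (hdeg : P.natDegree = R.natDegree) :
    ∃ a b : k, a ≠ 0 ∧ P = R.comp (C a * X + C b) ∧ S = C a * Q + C b :=
  stmt_2_general k P Q R S hQ hR h hdeg
end

section
/- (Quadratic sources force an involutive symmetry of g.) Let k be a field of characteristic zero, let f, g ∈ k[x] be nonconstant, let α ∈ k with α ≠ 0, let β ∈ k, and let B ∈ k[x] satisfy f.comp (C α * X^2 + C β) = g.comp B. Assume B is not a polynomial in X², i.e., B has a nonzero coefficient in some odd degree. Then there exist c ∈ k, a nonzero polynomial E ∈ k[x], and a nonconstant polynomial G ∈ k[x] such that g = G.comp ((X - C c)^2), B = C c + X * (E.comp (X^2)), and f.comp (C α * X + C β) = G.comp (X * E^2). -/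
open Polynomial Finset

namespace Stmt3Aux

lemma decomp2 {R : Type*} [CommSemiring R] (p : R[X]) :
    p = expand R 2 (contract 2 p) + X * expand R 2 (contract 2 p.divX) := by
  ext n
  rw [coeff_add]
  have h2 : (2:ℕ) ≠ 0 := two_ne_zero
  rcases Nat.even_or_odd n with ⟨s, hs⟩ | ⟨s, hs⟩
  · subst hs
    have hXmul : (X * expand R 2 (contract 2 p.divX)).coeff (s + s) = 0 := by
      rcases Nat.eq_zero_or_pos (s + s) with h | h
      · rw [h]; simp [coeff_mul_X_pow']
      · obtain ⟨t, ht⟩ : ∃ t, s + s = t + 1 := ⟨s + s - 1, by omega⟩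
        rw [ht, coeff_X_mul, coeff_expand (by norm_num)]
        have : ¬ (2 ∣ t) := by omega
        simp [this]
    rw [hXmul, add_zero, coeff_expand (by norm_num)]
    have hdvd : 2 ∣ s + s := ⟨s, by ring⟩
    rw [if_pos hdvd, coeff_contract h2]
    congr 1
    omega
  · subst hs
    have hEe : (expand R 2 (contract 2 p)).coeff (2 * s + 1) = 0 := by
      rw [coeff_expand (by norm_num)]
      have : ¬ (2 ∣ 2 * s + 1) := by omega
      simp [this]
    rw [hEe, zero_add, coeff_X_mul, coeff_expand (by norm_num)]
    have hdvd : 2 ∣ 2 * s := ⟨s, rfl⟩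
    rw [if_pos hdvd, coeff_contract h2, coeff_divX]
    congr 1
    omega


lemma hasseDeriv_facts {k : Type*} [Field k] [CharZero k] (g : k[X]) (j : ℕ)
    (hj : j ≤ g.natDegree) (hg0 : g ≠ 0) :
    (hasseDeriv j g).natDegree = g.natDegree - j ∧ (hasseDeriv j g).leadingCoeff ≠ 0 := by
  have hdeg : (hasseDeriv j g).natDegree = g.natDegree - j := natDegree_hasseDeriv g j
  refine ⟨hdeg, ?_⟩
  rw [leadingCoeff, hdeg, hasseDeriv_coeff]
  have he : g.natDegree - j + j = g.natDegree := by omega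
  rw [he]
  exact mul_ne_zero (Nat.cast_ne_zero.mpr (Nat.choose_pos hj).ne') (mt leadingCoeff_eq_zero.mp hg0)

lemma core {k : Type*} [Field k] [CharZero k] {g P Q : k[X]} (hm : 0 < g.natDegree)
    (hQ : Q ≠ 0) (hd : P.natDegree ≠ 0)
    {W : Polynomial k[X]} (hWc : ∀ l, W.coeff l = (hasseDeriv (2 * l + 1) g).comp P)
    (hW0 : Polynomial.eval (X * Q ^ 2 : k[X]) W = 0) : False := by
  set m := g.natDegree with hm'
  set d := P.natDegree with hd'
  set q := Q.natDegree with hq'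
  set R : k[X] := X * Q ^ 2 with hR'
  have hg0 : g ≠ 0 := fun h => by rw [hm', h, natDegree_zero] at hm; omega
  have hP0 : P ≠ 0 := fun h => hd (by simp [hd', h])
  have hQ2 : Q ^ 2 ≠ 0 := pow_ne_zero _ hQ
  have hR0 : R ≠ 0 := mul_ne_zero X_ne_zero hQ2
  have hRdeg : R.natDegree = 2 * q + 1 := by
    rw [hR', natDegree_mul X_ne_zero hQ2, natDegree_X, natDegree_pow]
    omega
  have hterm : ∀ l, 2 * l + 1 ≤ m →
      (W.coeff l).natDegree = (m - (2 * l + 1)) * d ∧ (W.coeff l).leadingCoeff ≠ 0 := by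
    intro l hl
    obtain ⟨h1, h2⟩ := hasseDeriv_facts g (2 * l + 1) hl hg0
    rw [hWc]
    constructor
    · rw [natDegree_comp, h1]
    · rw [leadingCoeff_comp hd]
      exact mul_ne_zero h2 (pow_ne_zero _ (mt leadingCoeff_eq_zero.mp hP0))
  have hzero : ∀ l, m < 2 * l + 1 → W.coeff l = 0 := by
    intro l hl
    rw [hWc, hasseDeriv_eq_zero_of_lt_natDegree g _ hl, zero_comp]
  set lmax := (m - 1) / 2 with hlmax'
  have hlm : 2 * lmax + 1 ≤ m := by omega
  have hWne : W.coeff lmax ≠ 0 := by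
    intro h
    exact (hterm lmax hlm).2 (by rw [h]; simp)
  have hWdeg : W.natDegree = lmax := by
    refine le_antisymm ?_ (le_natDegree_of_ne_zero hWne)
    refine natDegree_le_iff_coeff_eq_zero.mpr fun N hN => hzero N (by omega)
  -- the uniform contradiction builder
  have contra : ∀ ls : ℕ, ls ≤ lmax →
      (∀ l, l ≤ lmax → l ≠ ls →
        (m - (2 * l + 1)) * d + l * (2 * q + 1) <
          (m - (2 * ls + 1)) * d + ls * (2 * q + 1)) → False := by
    intro ls hls hmaxi
    set D := (m - (2 * ls + 1)) * d + ls * (2 * q + 1) with hD'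
    rw [eval_eq_sum_range, hWdeg] at hW0
    have hco := congrArg (fun p => p.coeff D) hW0
    simp only [finset_sum_coeff, coeff_zero] at hco
    rw [Finset.sum_eq_single ls] at hco
    · have hdeg : (W.coeff ls).natDegree + (R ^ ls).natDegree = D := by
        rw [natDegree_pow, hRdeg, (hterm ls (by omega)).1]
      rw [← hdeg, coeff_mul_degree_add_degree] at hco
      exact (mul_ne_zero (hterm ls (by omega)).2
        (by rw [leadingCoeff_pow]; exact pow_ne_zero _ (mt leadingCoeff_eq_zero.mp hR0))) hco
    · intro b hb hbne
      have hble : b ≤ lmax := by simp only [mem_range] at hb; omega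
      apply coeff_eq_zero_of_natDegree_lt
      calc (W.coeff b * R ^ b).natDegree
          ≤ (W.coeff b).natDegree + (R ^ b).natDegree := natDegree_mul_le
        _ = (m - (2 * b + 1)) * d + b * (2 * q + 1) := by
            rw [natDegree_pow, hRdeg, (hterm b (by omega)).1]
        _ < D := hmaxi b hble hbne
    · intro h
      simp only [mem_range] at h
      omega
  have hrd : 2 * q + 1 ≠ 2 * d := by omega
  rcases lt_or_gt_of_ne hrd with hcase | hcase
  · -- slope negative: max at ls = 0
    refine contra 0 (by omega) ?_
    intro l hl hne
    have hl1 : 1 ≤ l := by omega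
    have h2l : 2 * l + 1 ≤ m := by omega
    have he : m - (2 * 0 + 1) = (m - (2 * l + 1)) + 2 * l := by omega
    rw [he]
    have : l * (2 * q + 1) < l * (2 * d) :=
      mul_lt_mul_of_pos_left hcase (by omega)
    calc (m - (2 * l + 1)) * d + l * (2 * q + 1)
        < (m - (2 * l + 1)) * d + l * (2 * d) := by omega
      _ = ((m - (2 * l + 1)) + 2 * l) * d + 0 * (2 * q + 1) := by ring
  · -- slope positive: max at ls = lmax
    refine contra lmax (le_refl _) ?_
    intro l hl hne
    have hlt : l < lmax := by omega
    set Δ := lmax - l with hΔ'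
    have hΔ1 : 1 ≤ Δ := by omega
    have h2l : 2 * l + 1 ≤ m := by omega
    have he : m - (2 * l + 1) = (m - (2 * lmax + 1)) + 2 * Δ := by omega
    have hlm2 : lmax = l + Δ := by omega
    rw [he]
    have : Δ * (2 * d) < Δ * (2 * q + 1) :=
      mul_lt_mul_of_pos_left hcase (by omega)
    calc ((m - (2 * lmax + 1)) + 2 * Δ) * d + l * (2 * q + 1)
        = (m - (2 * lmax + 1)) * d + l * (2 * q + 1) + Δ * (2 * d) := by ring
      _ < (m - (2 * lmax + 1)) * d + l * (2 * q + 1) + Δ * (2 * q + 1) := by omega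
      _ = (m - (2 * lmax + 1)) * d + (l + Δ) * (2 * q + 1) := by ring
      _ = (m - (2 * lmax + 1)) * d + lmax * (2 * q + 1) := by rw [← hlm2]


variable {k : Type*} [Field k] [CharZero k]

noncomputable def ex2 : k[X] →+* k[X] := (expand k 2).toRingHom

omit [CharZero k] in
lemma ex2_apply (p : k[X]) : (ex2 : k[X] →+* k[X]) p = p.comp (X ^ 2) := rfl

omit [CharZero k] in
lemma ex2_inj : Function.Injective (ex2 : k[X] →+* k[X]) :=
  expand_injective (by norm_num)

omit [CharZero k] in
lemma hasseDeriv_map' (g : k[X]) (j : ℕ) :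
    hasseDeriv j (g.map (C : k →+* k[X])) = (hasseDeriv j g).map (C : k →+* k[X]) := by
  ext n
  simp [hasseDeriv_coeff, coeff_map]

omit [CharZero k] in
lemma eval₂_expand2 (w : k[X]) (p : Polynomial k[X]) :
    eval₂ (ex2 : k[X] →+* k[X]) w (expand k[X] 2 p) = eval₂ ex2 (w ^ 2) p := by
  rw [expand_eq_comp_X_pow, eval₂_comp]
  congr 1
  simp [eval₂_X_pow]

end Stmt3Aux

open Stmt3Aux

theorem stmt_3 (k : Type*) [Field k] [CharZero k] (f g : k[X])
    (hf : 0 < f.natDegree) (hg : 0 < g.natDegree)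
    (α : k) (hα : α ≠ 0) (β : k) (B : k[X])
    (hfg : f.comp (C α * X ^ 2 + C β) = g.comp B)
    (hodd : ∃ n, Odd n ∧ B.coeff n ≠ 0) :
    ∃ (c : k) (E G : k[X]), E ≠ 0 ∧ 0 < G.natDegree ∧
      g = G.comp ((X - C c) ^ 2) ∧
      B = C c + X * (E.comp (X ^ 2)) ∧
      f.comp (C α * X + C β) = G.comp (X * E ^ 2) := by
  classical
  obtain ⟨n₀, hn₀odd, hn₀⟩ := hodd
  set P : k[X] := contract 2 B with hP'
  set Q : k[X] := contract 2 B.divX with hQ'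
  have hQc : ∀ l, Q.coeff l = B.coeff (2 * l + 1) := by
    intro l
    rw [hQ', coeff_contract two_ne_zero, coeff_divX]
    congr 1
    ring
  have hQ0 : Q ≠ 0 := by
    obtain ⟨l, hl⟩ := hn₀odd
    intro h
    apply hn₀
    have h2 := hQc l
    rw [h, coeff_zero] at h2
    rw [hl, ← h2]
  set w : k[X] := X * expand k 2 Q with hw'
  have hw0 : w ≠ 0 := by
    refine mul_ne_zero X_ne_zero fun h => hQ0 (ex2_inj ?_)
    rw [map_zero]; exact h
  have hB2 : B = expand k 2 P + w := by rw [hw', hP', hQ']; exact decomp2 B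
  set gA := g.map (C : k →+* k[X]) with hgA'
  set H := taylor P gA with hH'
  have hHc : ∀ j, H.coeff j = (hasseDeriv j g).comp P := by
    intro j
    rw [hH', taylor_coeff, hgA', hasseDeriv_map', eval_map]
    rfl
  have hkey : ∀ v : k[X], eval₂ (ex2 (k := k)) v H = g.comp (v + expand k 2 P) := by
    intro v
    rw [hH', taylor_apply, eval₂_comp, eval₂_add, eval₂_X, eval₂_C, hgA', eval₂_map]
    have hcomp : (ex2 : k[X] →+* k[X]).comp (C : k →+* k[X]) = C :=
      RingHom.ext fun a => by rw [RingHom.comp_apply, ex2_apply, C_comp]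
    rw [hcomp]
    rfl
  have hBσ : B.comp (-X) = expand k 2 P - w := by
    rw [hB2, add_comp, mul_comp, X_comp, hw', expand_eq_comp_X_pow, expand_eq_comp_X_pow,
      comp_assoc, comp_assoc, pow_comp, X_comp, neg_sq]
    ring
  have hgBeven : g.comp (B.comp (-X)) = g.comp B := by
    have h1 : (g.comp B).comp (-X) = g.comp (B.comp (-X)) := comp_assoc g B (-X)
    have h2 : (f.comp (C α * X ^ 2 + C β)).comp (-X) = f.comp (C α * X ^ 2 + C β) := by
      rw [comp_assoc]
      congr 1
      rw [add_comp, mul_comp, C_comp, C_comp, pow_comp, X_comp, neg_sq]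
    rw [hfg] at h2
    rw [← h1, h2]
  set Ho := contract 2 H.divX with hHo'
  set He := contract 2 H with hHe'
  have hHdec : H = expand k[X] 2 He + X * expand k[X] 2 Ho := decomp2 H
  have h1 : eval₂ (ex2 (k := k)) w H = eval₂ ex2 (w^2) He + w * eval₂ ex2 (w^2) Ho := by
    rw [hHdec, eval₂_add, eval₂_mul, eval₂_X, eval₂_expand2, eval₂_expand2]
  have h2 : eval₂ (ex2 (k := k)) (-w) H = eval₂ ex2 (w^2) He - w * eval₂ ex2 (w^2) Ho := by
    rw [hHdec, eval₂_add, eval₂_mul, eval₂_X, eval₂_expand2, eval₂_expand2, neg_sq]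
    ring
  have h3 : eval₂ (ex2 (k := k)) w H = eval₂ ex2 (-w) H := by
    rw [hkey w, hkey (-w)]
    have e1 : w + expand k 2 P = B := by rw [hB2]; ring
    have e2 : -w + expand k 2 P = B.comp (-X) := by rw [hBσ]; ring
    rw [e1, e2, hgBeven]
  have hx : eval₂ (ex2 (k := k)) (w^2) Ho = 0 := by
    rw [h1, h2] at h3
    have h5 : (2 : k[X]) * (w * eval₂ ex2 (w^2) Ho) = 0 := by linear_combination h3
    rcases mul_eq_zero.mp h5 with h | h
    · exact absurd h two_ne_zero
    · rcases mul_eq_zero.mp h with h' | h'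
      · exact absurd h' hw0
      · exact h'
  have hw2 : w ^ 2 = (ex2 : k[X] →+* k[X]) (X * Q ^ 2) := by
    rw [map_mul, map_pow, hw', mul_pow]
    congr 1
    rw [ex2_apply, X_comp]
  have h6 : eval (X * Q ^ 2 : k[X]) Ho = 0 := by
    rw [hw2, eval₂_at_apply] at hx
    exact ex2_inj (by rw [hx, map_zero])
  have hHoc : ∀ l, Ho.coeff l = (hasseDeriv (2 * l + 1) g).comp P := by
    intro l
    rw [hHo', coeff_contract two_ne_zero, coeff_divX]
    have he : l * 2 + 1 = 2 * l + 1 := by ring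
    rw [he, hHc]
  have hPdeg : P.natDegree = 0 := by
    by_contra hdne
    exact core hg hQ0 hdne hHoc h6
  obtain ⟨c, hc⟩ : ∃ c, P = C c := ⟨P.coeff 0, eq_C_of_natDegree_eq_zero hPdeg⟩
  have hHoc' : ∀ l, Ho.coeff l = C (eval c (hasseDeriv (2 * l + 1) g)) := by
    intro l
    rw [hHoc, hc, comp_C]
  set A₀ := Ho.map (evalRingHom (0 : k)) with hA₀'
  have hA₀c : ∀ l, A₀.coeff l = eval c (hasseDeriv (2 * l + 1) g) := by
    intro l
    rw [hA₀', coeff_map, hHoc' l]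
    simp
  have hmapA : A₀.map (C : k →+* k[X]) = Ho := by
    ext l
    rw [coeff_map, hA₀c, hHoc']
  have hA₀comp : A₀.comp (X * Q ^ 2) = 0 := by
    show eval₂ C (X * Q ^ 2) A₀ = 0
    rw [← eval_map, hmapA]
    exact h6
  have hA₀0 : A₀ = 0 := by
    rcases comp_eq_zero_iff.mp hA₀comp with h | ⟨-, h⟩
    · exact h
    · exfalso
      have hdeg : (X * Q ^ 2 : k[X]).natDegree = 0 := by rw [h]; exact natDegree_C _
      rw [natDegree_mul X_ne_zero (pow_ne_zero _ hQ0), natDegree_X] at hdeg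
      omega
  have hoddzero : ∀ l, eval c (hasseDeriv (2 * l + 1) g) = 0 := by
    intro l
    rw [← hA₀c, hA₀0, coeff_zero]
  set G := contract 2 (taylor c g) with hG'
  have hoP : contract 2 (taylor c g).divX = 0 := by
    ext l
    rw [coeff_contract two_ne_zero, coeff_divX, coeff_zero]
    have he : l * 2 + 1 = 2 * l + 1 := by ring
    rw [he, taylor_coeff, hoddzero]
  have htay : taylor c g = expand k 2 G := by
    have hd := decomp2 (taylor c g)
    rw [hoP, map_zero, mul_zero, add_zero] at hd
    rw [hd, hG']
  have hgG : g = G.comp ((X - C c) ^ 2) := by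
    have h1 : g = (taylor c g).comp (X - C c) := by
      rw [taylor_apply, comp_assoc, add_comp, X_comp, C_comp, sub_add_cancel, comp_X]
    rw [h1, htay, expand_eq_comp_X_pow, comp_assoc, pow_comp, X_comp]
  have hGdeg : 0 < G.natDegree := by
    have h2 := natDegree_comp (p := G) (q := (X - C c) ^ 2)
    rw [← hgG, natDegree_pow, natDegree_X_sub_C] at h2
    omega
  refine ⟨c, Q, G, hQ0, hGdeg, hgG, ?_, ?_⟩
  · rw [hB2, hc, expand_C, hw', expand_eq_comp_X_pow]
  · apply ex2_inj
    have hL : (ex2 : k[X] →+* k[X]) (f.comp (C α * X + C β)) = g.comp B := by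
      rw [ex2_apply, comp_assoc, add_comp, mul_comp, C_comp, C_comp, X_comp, hfg]
    have hRR : (ex2 : k[X] →+* k[X]) (G.comp (X * Q ^ 2)) = g.comp B := by
      rw [ex2_apply, comp_assoc]
      have hcw : (X * Q ^ 2 : k[X]).comp (X ^ 2) = w ^ 2 := by
        rw [mul_comp, X_comp, pow_comp, hw', mul_pow, expand_eq_comp_X_pow]
      rw [hcw]
      have hgB : g.comp B = G.comp (w ^ 2) := by
        rw [hB2, hc, expand_C]
        have he : (C c + w : k[X]) = (X + C c).comp w := by
          rw [add_comp, X_comp, C_comp, add_comm]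
        rw [he, ← comp_assoc, ← taylor_apply, htay, expand_eq_comp_X_pow, comp_assoc,
          pow_comp, X_comp]
      rw [hgB]
    rw [hL, hRR]
end

section
/- (Construction of quadratic sources from an involutive quotient.) Let k be a field of characteristic zero, let α ∈ k with α ≠ 0, let β, c ∈ k, let E ∈ k[x] be a nonzero polynomial, and let G ∈ k[x] be nonconstant. Define g := G.comp ((X - C c)^2), B := C c + X * (E.comp (X^2)), A := C α * X^2 + C β, and f := (G.comp (X * E^2)).comp (C α⁻¹ * X - C (β/α)). Then f.comp A = g.comp B; the polynomial B is not a polynomial in X²; and the intermediate field of k(X) generated over k by the images of A and B equals all of k(X). -/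
/-!
The affine map `(X - β) / α` inverts `A = αX² + β` up to the square, so
`f ∘ A = G ∘ (X E²) ∘ X²`, while `(X - c)² ∘ B = X² E(X²)²`. The coefficient of `X^(2n+1)` in `B`
is that of `X^n` in `E`, so `B` is not a polynomial in `X²`. Finally `k(A, B)` contains
`X² = (A - β)/α`, hence `E(X²)`, hence `X = (B - c)/E(X²)`.
-/

open Polynomial

theorem Polynomial.coeff_comp_X_sq_odd {R : Type*} [CommSemiring R] (p : R[X]) (n : ℕ) :
    (p.comp (X ^ 2)).coeff (2 * n + 1) = 0 := by
  rw [← expand_eq_comp_X_pow, coeff_expand two_pos, if_neg (by omega)]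

theorem Polynomial.coeff_C_add_X_mul_comp_X_sq {R : Type*} [CommSemiring R] (c : R) (E : R[X])
    (n : ℕ) : (C c + X * E.comp (X ^ 2)).coeff (2 * n + 1) = E.coeff n := by
  rw [coeff_add, coeff_C, if_neg (by omega), coeff_X_mul, ← expand_eq_comp_X_pow,
    coeff_expand_mul' two_pos, zero_add]

theorem Polynomial.not_exists_C_add_X_mul_comp_X_sq_eq {R : Type*} [CommSemiring R] (c : R)
    {E : R[X]} (hE : E ≠ 0) : ¬ ∃ B₀ : R[X], C c + X * E.comp (X ^ 2) = B₀.comp (X ^ 2) := by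
  rintro ⟨B₀, h⟩
  exact hE (ext fun n ↦ by rw [coeff_zero, ← coeff_C_add_X_mul_comp_X_sq c, h, coeff_comp_X_sq_odd])

theorem Polynomial.C_inv_mul_X_sub_C_div_comp {k : Type*} [Field k] {α : k} (hα : α ≠ 0) (β : k) :
    (C α⁻¹ * X - C (β / α)).comp (C α * X ^ 2 + C β) = X ^ 2 := by
  simp only [sub_comp, mul_comp, C_comp, X_comp, div_eq_inv_mul, C_mul]
  rw [mul_add, ← mul_assoc, ← C_mul, inv_mul_cancel₀ hα, C_1]
  ring

theorem Polynomial.sq_sub_C_comp {R : Type*} [CommRing R] (c : R) (E : R[X]) :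
    ((X - C c) ^ 2).comp (C c + X * E.comp (X ^ 2)) = (X * E ^ 2).comp (X ^ 2) := by
  simp only [pow_comp, sub_comp, mul_comp, X_comp, C_comp]
  ring

theorem IntermediateField.aeval_mem {K L : Type*} [Field K] [Field L] [Algebra K L]
    (F : IntermediateField K L) {x : L} (hx : x ∈ F) (p : K[X]) : aeval x p ∈ F :=
  aeval_algHom_apply F.val ⟨x, hx⟩ p ▸ (aeval (⟨x, hx⟩ : F) p).2

namespace RatFunc
variable {k : Type*} [Field k]

theorem algebraMap_comp (p q : k[X]) :
    algebraMap k[X] (RatFunc k) (p.comp q) = aeval (algebraMap k[X] (RatFunc k) q) p := by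
  rw [← aeval_X_left_eq_algebraMap, aeval_comp, aeval_X_left_eq_algebraMap]

theorem eq_top_of_X_mem {F : IntermediateField k (RatFunc k)} (hX : X ∈ F) : F = ⊤ :=
  top_le_iff.mp (adjoin_X (K := k) ▸ IntermediateField.adjoin_simple_le_iff.mpr hX)

end RatFunc

theorem adjoin_C_mul_X_sq_add_C_and_C_add_X_mul_comp_X_sq_eq_top {k : Type*} [Field k] {α : k}
    (hα : α ≠ 0) (β c : k) {E : k[X]} (hE : E ≠ 0) :
    IntermediateField.adjoin k {algebraMap k[X] (RatFunc k) (C α * X ^ 2 + C β),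
      algebraMap k[X] (RatFunc k) (C c + X * E.comp (X ^ 2))} = ⊤ := by
  set i := algebraMap k[X] (RatFunc k)
  set F := IntermediateField.adjoin k {i (C α * X ^ 2 + C β), i (C c + X * E.comp (X ^ 2))}
  have hA : i (C α * X ^ 2 + C β) ∈ F := IntermediateField.subset_adjoin _ _ (by simp)
  have hB : i (C c + X * E.comp (X ^ 2)) ∈ F := IntermediateField.subset_adjoin _ _ (by simp)
  have hC (a : k) : i (C a) ∈ F := by
    simpa [i, RatFunc.algebraMap_eq_C] using F.algebraMap_mem a
  have hX2 : i (X ^ 2) ∈ F := by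
    have : i (X ^ 2) = (i (C α * X ^ 2 + C β) - i (C β)) / i (C α) := by
      rw [map_add, add_sub_cancel_right, map_mul, mul_div_cancel_left₀ _ (by simpa [i] using hα)]
    exact this ▸ F.div_mem (F.sub_mem hA (hC β)) (hC α)
  have hE2 : i (E.comp (X ^ 2)) ∈ F := RatFunc.algebraMap_comp E _ ▸ F.aeval_mem hX2 E
  have hE2ne : i (E.comp (X ^ 2)) ≠ 0 :=
    RatFunc.algebraMap_ne_zero ((expand_ne_zero two_pos).mpr hE)
  have hX : i X = (i (C c + X * E.comp (X ^ 2)) - i (C c)) / i (E.comp (X ^ 2)) := by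
    rw [map_add, add_sub_cancel_left, map_mul, mul_div_cancel_right₀ _ hE2ne]
  refine RatFunc.eq_top_of_X_mem ?_
  rw [← RatFunc.algebraMap_X, hX]
  exact F.div_mem (F.sub_mem hB (hC c)) hE2

theorem stmt_4_general (k : Type*) [Field k]
    (α : k) (hα : α ≠ 0) (β c : k) (E G : k[X]) (hE : E ≠ 0)
    (g B A f : k[X])
    (hg : g = G.comp ((X - C c) ^ 2))
    (hB : B = C c + X * (E.comp (X ^ 2)))
    (hA : A = C α * X ^ 2 + C β)
    (hf : f = (G.comp (X * E ^ 2)).comp (C α⁻¹ * X - C (β / α))) :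
    f.comp A = g.comp B ∧
    (¬ ∃ B₀ : k[X], B = B₀.comp (X ^ 2)) ∧
    IntermediateField.adjoin k
      {algebraMap k[X] (RatFunc k) A, algebraMap k[X] (RatFunc k) B} = ⊤ := by
  subst hg hB hA hf
  refine ⟨?_, not_exists_C_add_X_mul_comp_X_sq_eq c hE,
    adjoin_C_mul_X_sq_add_C_and_C_add_X_mul_comp_X_sq_eq_top hα β c hE⟩
  simp only [comp_assoc, C_inv_mul_X_sub_C_div_comp hα, sq_sub_C_comp]

theorem stmt_4 (k : Type*) [Field k] [CharZero k]
    (α : k) (hα : α ≠ 0) (β c : k) (E G : k[X]) (hE : E ≠ 0) (hG : 0 < G.natDegree)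
    (g B A f : k[X])
    (hg : g = G.comp ((X - C c) ^ 2))
    (hB : B = C c + X * (E.comp (X ^ 2)))
    (hA : A = C α * X ^ 2 + C β)
    (hf : f = (G.comp (X * E ^ 2)).comp (C α⁻¹ * X - C (β / α))) :
    f.comp A = g.comp B ∧
    (¬ ∃ B₀ : k[X], B = B₀.comp (X ^ 2)) ∧
    IntermediateField.adjoin k
      {algebraMap k[X] (RatFunc k) A, algebraMap k[X] (RatFunc k) B} = ⊤ :=
  stmt_4_general k α hα β c E G hE g B A f hg hB hA hf
end

section
/- (Uniqueness of the center of a source-even polynomial.) Let k be a field of characteristic zero and let g ∈ k[x] be nonconstant. If c₁, c₂ ∈ k satisfy g.comp (C (2*c₁) - X) = g and g.comp (C (2*c₂) - X) = g, then c₁ = c₂. -/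
open Polynomial

theorem stmt_6 (k : Type*) [Field k] [CharZero k] (g : k[X]) (hg : 0 < g.natDegree)
    (c₁ c₂ : k) (h₁ : g.comp (C (2 * c₁) - X) = g) (h₂ : g.comp (C (2 * c₂) - X) = g) :
    c₁ = c₂ := by
  set t : k := 2 * c₁ - 2 * c₂ with ht
  have key : g.comp (X + C t) = g := by
    have := congrArg (fun p => p.comp (C (2 * c₂) - X)) h₁
    rw [comp_assoc] at this
    have hcomp : (C (2 * c₁) - X).comp (C (2 * c₂) - X) = X + C t := by
      simp [sub_comp, ht]
      ring
    rw [hcomp, h₂] at this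
    exact this
  by_contra hne
  have htne : t ≠ 0 := by
    intro h0
    apply hne
    have : 2 * c₁ = 2 * c₂ := by linear_combination h0
    have h2 : (2 : k) ≠ 0 := two_ne_zero
    exact mul_left_cancel₀ h2 this
  -- g.eval (n * t) = g.eval 0 for all n
  have heval : ∀ n : ℕ, g.eval ((n : k) * t) = g.eval 0 := by
    intro n
    induction n with
    | zero => simp
    | succ m ih =>
      have := congrArg (fun p => p.eval ((m : k) * t)) key
      simp only [eval_comp, eval_add, eval_X, eval_C] at this
      rw [← ih, ← this]
      push_cast
      ring_nf
  set p : k[X] := g - C (g.eval 0) with hp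
  have hpne : p ≠ 0 := by
    intro h0
    have : g = C (g.eval 0) := by rwa [sub_eq_zero] at h0
    rw [this] at hg
    simp at hg
  have hroots : Set.Finite { x | IsRoot p x } := finite_setOf_isRoot hpne
  have hinj : Function.Injective (fun n : ℕ => (n : k) * t) := by
    intro a b hab
    simp only [mul_eq_mul_right_iff, Nat.cast_inj] at hab
    tauto
  have hmem : ∀ n : ℕ, (fun n : ℕ => (n : k) * t) n ∈ { x | IsRoot p x } := by
    intro n
    simp [hp, IsRoot, heval n]
  exact (Set.infinite_of_injective_forall_mem hinj hmem) hroots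
end

section
/- (Odd degree excludes quadratic sources.) Let k be a field of characteristic zero and let f, g ∈ k[x] be nonconstant with natDegree g odd. Then there do not exist α ∈ k with α ≠ 0, β ∈ k, and B ∈ k[x] such that f.comp (C α * X^2 + C β) = g.comp B and B has a nonzero coefficient in some odd degree. -/
open Polynomial Finset

private lemma coeff_comp_neg_X {R : Type*} [CommRing R] (p : R[X]) (m : ℕ) :
    (p.comp (-X)).coeff m = (-1 : R) ^ m * p.coeff m := by
  induction p using Polynomial.induction_on' with
  | add p q hp hq => simp [add_comp, hp, hq, mul_add]
  | monomial i a =>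
    rw [← C_mul_X_pow_eq_monomial, mul_comp, C_comp, pow_comp, X_comp, neg_pow,
      show ((-1 : R[X])) = C (-1) from by simp, ← C_pow, ← mul_assoc, ← C_mul]
    simp only [coeff_C_mul, coeff_X_pow]
    split_ifs with h
    · subst h; ring
    · ring

theorem stmt_9 (k : Type*) [Field k] [CharZero k] (f g : k[X])
    (hf : 0 < f.natDegree) (hg : 0 < g.natDegree) (hodd : Odd g.natDegree) :
    ¬ ∃ (α : k) (β : k) (B : k[X]), α ≠ 0 ∧
        f.comp (C α * X ^ 2 + C β) = g.comp B ∧ ∃ n, Odd n ∧ B.coeff n ≠ 0 := by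
  rintro ⟨α, β, B, hα, hfg, n, hn, hBn⟩
  set q : k[X] := C α * X ^ 2 + C β with hq
  have hqdeg : q.natDegree = 2 := by
    rw [hq, natDegree_add_C, natDegree_C_mul_X_pow 2 α hα]
  have hnpos : 0 < n := by
    rcases hn with ⟨m, rfl⟩; omega
  set d := B.natDegree with hd
  set N := g.natDegree with hN
  -- degree equation
  have hdeg : f.natDegree * 2 = N * d := by
    have := congrArg natDegree hfg
    rwa [natDegree_comp, natDegree_comp, hqdeg] at this
  have hdpos : 0 < d := by
    rcases Nat.eq_zero_or_pos d with h | h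
    · exact absurd (coeff_eq_zero_of_natDegree_lt (by omega)) hBn
    · exact h
  have hdeven : Even d := by
    have h2 : Even (N * d) := ⟨f.natDegree, by omega⟩
    rcases Nat.even_mul.mp h2 with h | h
    · exact absurd h (Nat.not_even_iff_odd.mpr hodd)
    · exact h
  -- the reflected polynomial
  set B' : k[X] := B.comp (-X) with hB'
  have hB'deg : B'.natDegree = d := by
    rw [hB', natDegree_comp, natDegree_neg, natDegree_X, mul_one]
  have hqneg : q.comp (-X) = q := by
    rw [hq]
    rw [add_comp, mul_comp, C_comp, pow_comp, X_comp, neg_sq, C_comp]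
  have hgB' : g.comp B' = g.comp B := by
    calc g.comp B' = (g.comp B).comp (-X) := (comp_assoc g B (-X)).symm
    _ = (f.comp q).comp (-X) := by rw [hfg]
    _ = f.comp (q.comp (-X)) := comp_assoc f q (-X)
    _ = f.comp q := by rw [hqneg]
    _ = g.comp B := hfg
  have hBne : B ≠ 0 := fun h => by simp [h] at hd; omega
  set c := B.leadingCoeff with hc
  have hcne : c ≠ 0 := leadingCoeff_ne_zero.mpr hBne
  have hB'lc : B'.leadingCoeff = c := by
    rw [leadingCoeff, hB'deg, hB', coeff_comp_neg_X, hdeven.neg_one_pow, one_mul]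
    rfl
  have hB'ne : B' ≠ 0 := fun h => by rw [h, natDegree_zero] at hB'deg; omega
  -- key: B = B'
  set T : k[X] := ∑ i ∈ range (N + 1),
      C (g.coeff i) * ∑ j ∈ range i, B ^ j * B' ^ (i - 1 - j) with hT
  have hsum : ∀ p : k[X], g.comp p = ∑ i ∈ range (N + 1), C (g.coeff i) * p ^ i := by
    intro p
    rw [show g.comp p = eval₂ C p g from rfl, eval₂_eq_sum_range]
  have hTD : T * (B - B') = 0 := by
    have : T * (B - B') = g.comp B - g.comp B' := by
      rw [hsum B, hsum B', hT, Finset.sum_mul, ← Finset.sum_sub_distrib]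
      refine Finset.sum_congr rfl fun i _ => ?_
      rw [mul_assoc, geom_sum₂_mul, mul_sub]
    rw [this, hgB', sub_self]
  have hTne : T ≠ 0 := by
    intro h0
    have hcoeff : T.coeff ((N - 1) * d) ≠ 0 := by
      rw [hT, finset_sum_coeff]
      have hmain : ∀ i ∈ range (N + 1),
          (C (g.coeff i) * ∑ j ∈ range i, B ^ j * B' ^ (i - 1 - j)).coeff ((N - 1) * d)
          = if i = N then g.coeff N * (N * c ^ (N - 1)) else 0 := by
        intro i hi
        rw [mem_range] at hi
        rw [coeff_C_mul]
        split_ifs with h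
        · subst h
          rw [finset_sum_coeff]
          have key : ∀ j ∈ range N, (B ^ j * B' ^ (N - 1 - j)).coeff ((N - 1) * d)
              = c ^ (N - 1) := by
            intro j hj
            rw [mem_range] at hj
            have hdeq : (N - 1) * d = (B ^ j).natDegree + (B' ^ (N - 1 - j)).natDegree := by
              rw [natDegree_pow, natDegree_pow, hB'deg, ← hd]
              have hji : j + (N - 1 - j) = N - 1 := by omega
              rw [← add_mul, hji]
            rw [hdeq, coeff_mul_degree_add_degree, leadingCoeff_pow, leadingCoeff_pow,
              hB'lc, ← hc, ← pow_add]
            congr 1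
            omega
          rw [Finset.sum_congr rfl key, Finset.sum_const, card_range, nsmul_eq_mul]
        · -- i ≠ N, so i < N : degree too small
          rcases Nat.eq_zero_or_pos i with rfl | hipos
          · simp
          have hle : (∑ j ∈ range i, B ^ j * B' ^ (i - 1 - j)).natDegree < (N - 1) * d := by
            refine lt_of_le_of_lt (natDegree_sum_le_of_forall_le _ _ fun j hj => ?_)
              ((Nat.mul_lt_mul_right hdpos).mpr (by omega : i - 1 < N - 1))
            refine le_trans (natDegree_mul_le) ?_
            rw [natDegree_pow, natDegree_pow, hB'deg, ← hd, ← add_mul]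
            rw [mem_range] at hj
            exact Nat.mul_le_mul_right d (by omega)
          rw [coeff_eq_zero_of_natDegree_lt hle, mul_zero]
      rw [Finset.sum_congr rfl hmain, Finset.sum_ite_eq' (range (N + 1)) N]
      rw [if_pos (mem_range.mpr (by omega))]
      have hgne : g ≠ 0 := fun h => by rw [h, natDegree_zero] at hN; omega
      have hgN : g.coeff N ≠ 0 := by
        rw [hN]; exact leadingCoeff_ne_zero.mpr hgne
      have hNne : (N : k) ≠ 0 := Nat.cast_ne_zero.mpr (by omega)
      exact mul_ne_zero hgN (mul_ne_zero hNne (pow_ne_zero _ hcne))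
    rw [h0] at hcoeff
    simp at hcoeff
  have hBB' : B = B' := by
    rcases mul_eq_zero.mp hTD with h | h
    · exact absurd h hTne
    · exact sub_eq_zero.mp h
  -- conclude
  have hneg : B.coeff n = - B.coeff n := by
    conv_lhs => rw [hBB', hB', coeff_comp_neg_X, hn.neg_one_pow, neg_one_mul]
  have h2 : (2 : k) * B.coeff n = 0 := by linear_combination hneg
  rcases mul_eq_zero.mp h2 with h | h
  · exact two_ne_zero h
  · exact hBn h
end

section
/- (Monomial source-even rigidity.) Let k be a field of characteristic zero, let m be a positive even integer, and suppose c ∈ k and G ∈ k[x] satisfy X^m = G.comp ((X - C c)^2). Then c = 0 and G = X^(m/2). -/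
open Polynomial

theorem stmt_10 (k : Type*) [Field k] [CharZero k] (m : ℕ) (hm : 0 < m) (hme : Even m)
    (c : k) (G : k[X]) (h : (X : k[X]) ^ m = G.comp ((X - C c) ^ 2)) :
    c = 0 ∧ G = X ^ (m / 2) := by
  have hc : c = 0 := by
    have h2 : ((X : k[X]) ^ m).comp (C (2 * c) - X) =
        (G.comp ((X - C c) ^ 2)).comp (C (2 * c) - X) := by rw [h]
    rw [pow_comp, X_comp, comp_assoc, pow_comp, sub_comp, X_comp, C_comp] at h2
    have hC : (C (2 * c) : k[X]) = C c + C c := by rw [two_mul, C_add]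
    have hsq : (C (2 * c) - X - C c : k[X]) ^ 2 = (X - C c) ^ 2 := by rw [hC]; ring
    rw [hsq, ← h] at h2
    -- h2 : (C (2*c) - X)^m = X^m
    have := congrArg (Polynomial.eval (2 * c)) h2
    simp [zero_pow hm.ne'] at this
    have h2c : (2 * c : k) = 0 := (pow_eq_zero_iff hm.ne').mp this.symm
    exact (mul_eq_zero.mp h2c).resolve_left two_ne_zero
  subst hc
  refine ⟨rfl, ?_⟩
  have hX : (X : k[X]) ^ m = (X ^ (m / 2)).comp (X ^ 2) := by
    rw [pow_comp, X_comp, ← pow_mul]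
    congr 1
    obtain ⟨r, hr⟩ := hme
    omega
  simp only [C_0, sub_zero] at h
  rw [hX] at h
  have h0 : (G - X ^ (m / 2)).comp ((X : k[X]) ^ 2) = 0 := by
    rw [sub_comp, ← h, sub_self]
  rcases comp_eq_zero_iff.mp h0 with h1 | ⟨_, h2⟩
  · exact sub_eq_zero.mp h1
  · exfalso
    have : ((X : k[X]) ^ 2).natDegree = 0 := by rw [h2]; simp
    simp [natDegree_X_pow] at this
end

section
/- (Uniform denominator control.) Let k be a number field with ring of integers 𝓞_k, and let S be a finite set of finite places of k (height-one primes of 𝓞_k). Let f, g ∈ k[x] with g nonconstant. Then there exists a finite set S' of finite places with S ⊆ S' such that for every a in the ring of S-integers of k and every y ∈ k with g.eval y = f.eval a, the element y lies in the ring of S'-integers of k. -/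
/-!
Normalise `g` to the monic polynomial `g * C c` with `c = g.leadingCoeff⁻¹`, so that
`g.eval y = f.eval a` becomes `(g * C c).eval y = (f * C c).eval a`. Outside the finitely many
places where some coefficient of `f * C c` or `g * C c` is not integral, the right-hand side is
integral whenever `a` is, while `v y > 1` would force `v ((g * C c).eval y) = v y ^ deg g > 1`.
-/

open Polynomial NumberField IsDedekindDomain Set

namespace Valuation

variable {R Γ₀ : Type*} [CommRing R] [LinearOrderedCommGroupWithZero Γ₀] (v : Valuation R Γ₀)

theorem map_eval_le_one {p : R[X]} (hp : ∀ i, v (p.coeff i) ≤ 1) {x : R} (hx : v x ≤ 1) :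
    v (p.eval x) ≤ 1 := by
  rw [eval_eq_sum_range]
  refine v.map_sum_le fun i _ => ?_
  rw [map_mul, map_pow]
  exact mul_le_one' (hp i) (pow_le_one' hx i)

theorem map_eval_of_monic_of_one_lt {p : R[X]} (hmonic : p.Monic) (hp : ∀ i, v (p.coeff i) ≤ 1)
    {y : R} (hy : 1 < v y) : v (p.eval y) = v y ^ p.natDegree := by
  have hlower : v (∑ i ∈ Finset.range p.natDegree, p.coeff i * y ^ i) < v (y ^ p.natDegree) := by
    rw [map_pow]
    refine v.map_sum_lt (pow_ne_zero _ (zero_lt_one.trans hy).ne') fun i hi => ?_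
    rw [map_mul, map_pow]
    exact mul_lt_of_le_one_of_lt (hp i) (pow_lt_pow_right₀ hy (Finset.mem_range.mp hi))
  rw [eval_eq_sum_range, Finset.sum_range_succ, hmonic.coeff_natDegree, one_mul,
    v.map_add_eq_of_lt_right hlower, map_pow]

theorem le_one_of_map_eval_le_one {p : R[X]} (hmonic : p.Monic) (hdeg : 0 < p.natDegree)
    (hp : ∀ i, v (p.coeff i) ≤ 1) {y : R} (hy : v (p.eval y) ≤ 1) : v y ≤ 1 := by
  by_contra! hy₁
  rw [v.map_eval_of_monic_of_one_lt hmonic hp hy₁] at hy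
  exact (one_lt_pow₀ hy₁ hdeg.ne').not_ge hy

end Valuation

namespace IsDedekindDomain.HeightOneSpectrum

variable (R : Type*) [CommRing R] [IsDedekindDomain R] {K : Type*} [Field K] [Algebra R K]
  [IsFractionRing R K]

def coeffSupport (p : K[X]) : Set (HeightOneSpectrum R) :=
  ⋃ i ∈ p.support, Support R (p.coeff i)

theorem coeffSupport_finite (p : K[X]) : (coeffSupport R p).Finite :=
  p.support.finite_toSet.biUnion fun i _ => Support.finite R (p.coeff i)

variable {R}

theorem valuation_coeff_le_one_of_notMem_coeffSupport {p : K[X]} {v : HeightOneSpectrum R}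
    (hv : v ∉ coeffSupport R p) (i : ℕ) : v.valuation K (p.coeff i) ≤ 1 := by
  by_cases hi : i ∈ p.support
  · simp only [coeffSupport, mem_iUnion, not_exists] at hv
    exact not_lt.mp (hv i hi)
  · rw [notMem_support_iff.mp hi, map_zero]
    exact zero_le

end IsDedekindDomain.HeightOneSpectrum

open HeightOneSpectrum

theorem stmt_11 (k : Type*) [Field k] [NumberField k]
    (S : Set (HeightOneSpectrum (𝓞 k))) (hS : S.Finite)
    (f g : k[X]) (hg : 0 < g.natDegree) :
    ∃ S' : Set (HeightOneSpectrum (𝓞 k)), S'.Finite ∧ S ⊆ S' ∧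
      ∀ a ∈ S.integer k, ∀ y : k, g.eval y = f.eval a → y ∈ S'.integer k := by
  have hg₀ : g ≠ 0 := ne_zero_of_natDegree_gt hg
  set c := g.leadingCoeff⁻¹
  have hmonic : (g * C c).Monic := monic_mul_leadingCoeff_inv hg₀
  have hdeg : 0 < (g * C c).natDegree := by
    rwa [natDegree_mul_C (inv_ne_zero (leadingCoeff_ne_zero.mpr hg₀))]
  refine ⟨S ∪ coeffSupport (𝓞 k) (f * C c) ∪ coeffSupport (𝓞 k) (g * C c),
    (hS.union (coeffSupport_finite _ _)).union (coeffSupport_finite _ _),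
    subset_union_left.trans subset_union_left, ?_⟩
  intro a ha y hy v hv
  simp only [mem_union, not_or] at hv
  obtain ⟨⟨hvS, hvf⟩, hvg⟩ := hv
  have heval : (g * C c).eval y = (f * C c).eval a := by simp only [eval_mul, eval_C, hy]
  refine (v.valuation k).le_one_of_map_eval_le_one hmonic hdeg
    (valuation_coeff_le_one_of_notMem_coeffSupport hvg) ?_
  rw [heval]
  exact (v.valuation k).map_eval_le_one
    (valuation_coeff_le_one_of_notMem_coeffSupport hvf) (ha v hvS)
end

section
/- (Finite denominator test over ℚ.) Let A ∈ ℚ[x] be nonconstant. Then there exists a positive integer M such that for every rational number q, if A.eval q is an integer (i.e., (A.eval q).den = 1), then the denominator of q divides M. -/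
open Polynomial

lemma key_den_dvd {P : ℤ[X]} {q : ℚ} (h0 : 0 < P.natDegree)
    (hr : Polynomial.eval₂ (Int.castRingHom ℚ) q P = 0) : (q.den : ℤ) ∣ P.leadingCoeff := by
  have h1 : Polynomial.eval₂ (Int.castRingHom ℚ) ((Int.castRingHom ℚ) (q.den : ℤ) * q)
      (P.scaleRoots (q.den : ℤ)) = 0 := Polynomial.scaleRoots_eval₂_eq_zero _ hr
  have hdq : ((Int.castRingHom ℚ) (q.den : ℤ)) * q = (Int.castRingHom ℚ) q.num := by
    rw [mul_comm]
    simp only [eq_intCast, Int.cast_natCast]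
    exact Rat.mul_den_eq_num q
  rw [hdq, Polynomial.eval₂_at_apply] at h1
  have hroot : (P.scaleRoots (q.den : ℤ)).IsRoot q.num := by
    have : (((P.scaleRoots (q.den : ℤ)).eval q.num : ℤ) : ℚ) = 0 := h1
    exact_mod_cast this
  set n := P.natDegree with hn
  have hterm : (q.den : ℤ) ∣ (P.scaleRoots (q.den : ℤ)).coeff n * q.num ^ n := by
    apply Polynomial.dvd_term_of_isRoot_of_dvd_terms n hroot
    intro j hj
    rcases lt_or_gt_of_ne hj with h | h
    · rw [Polynomial.coeff_scaleRoots]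
      exact Dvd.dvd.mul_right (Dvd.dvd.mul_left
        (dvd_pow_self _ (Nat.sub_ne_zero_of_lt h)) _) _
    · rw [Polynomial.coeff_eq_zero_of_natDegree_lt, zero_mul]
      · exact dvd_zero _
      · rwa [Polynomial.natDegree_scaleRoots]
  rw [Polynomial.coeff_scaleRoots_natDegree] at hterm
  have hcop : IsCoprime ((q.den : ℤ)) (q.num ^ n) := by
    apply IsCoprime.pow_right
    rw [Int.isCoprime_iff_gcd_eq_one]
    simpa [Int.gcd] using q.reduced.symm
  exact hcop.dvd_of_dvd_mul_right hterm


theorem stmt_13 (A : ℚ[X]) (hA : 0 < A.natDegree) :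
    ∃ M : ℕ, 0 < M ∧ ∀ q : ℚ, (A.eval q).den = 1 → q.den ∣ M := by
  obtain ⟨b, hb⟩ := IsLocalization.integerNormalization_map_to_map (nonZeroDivisors ℤ) A
  set B := IsLocalization.integerNormalization (nonZeroDivisors ℤ) A with hBdef
  have hbne : ((b : ℤ) : ℚ) ≠ 0 := by exact_mod_cast nonZeroDivisors.coe_ne_zero b
  have hmap : B.map (Int.castRingHom ℚ) = Polynomial.C (((b : ℤ) : ℚ)) * A := by
    have : (algebraMap ℤ ℚ) = Int.castRingHom ℚ := rfl
    rw [← this, hb, zsmul_eq_mul]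
    simp
  have hdegB : B.natDegree = A.natDegree := by
    rw [← Polynomial.natDegree_map_eq_of_injective
      ((Int.castRingHom ℚ)).injective_int B, hmap, Polynomial.natDegree_C_mul hbne]
  have hBleadne : B.leadingCoeff ≠ 0 := by
    rw [Polynomial.leadingCoeff_ne_zero]
    intro h
    rw [h, Polynomial.natDegree_zero] at hdegB
    omega
  refine ⟨B.leadingCoeff.natAbs, Int.natAbs_pos.mpr hBleadne, ?_⟩
  intro q hq
  set k : ℤ := (A.eval q).num with hkdef
  have hk : ((k : ℤ) : ℚ) = A.eval q := (Rat.den_eq_one_iff _).mp hq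
  set P : ℤ[X] := B - Polynomial.C ((b : ℤ) * k) with hP
  have hPdeg : P.natDegree = B.natDegree := by
    rw [hP]
    exact Polynomial.natDegree_sub_C
  have hProot : Polynomial.eval₂ (Int.castRingHom ℚ) q P = 0 := by
    rw [Polynomial.eval₂_eq_eval_map]
    have hmapP : P.map (Int.castRingHom ℚ)
        = Polynomial.C (((b : ℤ) : ℚ)) * A - Polynomial.C ((((b : ℤ) * k : ℤ)) : ℚ) := by
      rw [hP, Polynomial.map_sub, Polynomial.map_C, hmap]
      simp
    rw [hmapP]
    simp [hk]
  have hdvd := key_den_dvd (P := P) (by rw [hPdeg, hdegB]; exact hA) hProot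
  have hlead : P.leadingCoeff = B.leadingCoeff := by
    have hne : B.natDegree ≠ 0 := by omega
    rw [hP, Polynomial.leadingCoeff, Polynomial.natDegree_sub_C, Polynomial.coeff_sub,
      Polynomial.coeff_C, if_neg hne, sub_zero]
    rfl
  rw [hlead] at hdvd
  exact Int.natCast_dvd_natCast.mp (Int.dvd_natAbs.mpr hdvd)
end

section
/- (Denominator clearing over a number field.) Let k be a number field with ring of integers 𝓞_k, let S be a finite set of finite places of k, and let A ∈ k[x] be nonconstant. Then there exists δ ∈ k with δ ≠ 0 such that for every t ∈ k with A.eval t ∈ 𝓞_{k,S}, one has δ*t ∈ 𝓞_{k,S}. -/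
open Polynomial NumberField IsDedekindDomain

/-!
Pick `0 ≠ c ∈ 𝓞_k` with `c A ∈ 𝓞_k[x]`. If `A t` is an `S`-integer, then `t` is a root of
`p = c A - c A(t)`, whose coefficients are `S`-integers, so for every place `v ∉ S` the element
`lc(p) t` is integral over the valuation ring of `v` and hence lies in it. As `A` is nonconstant,
`lc(p) = c lc(A)`, which is the `δ` sought.
-/

theorem Polynomial.leadingCoeff_sub_C_of_natDegree_pos {R : Type*} [Ring R] {p : R[X]}
    (hp : 0 < p.natDegree) (a : R) : (p - C a).leadingCoeff = p.leadingCoeff :=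
  leadingCoeff_sub_of_degree_lt <| degree_C_le.trans_lt <| natDegree_pos_iff_degree_pos.1 hp

theorem Valuation.leadingCoeff_mul_le_one_of_eval_eq_zero {K Γ₀ : Type*} [Field K]
    [LinearOrderedCommGroupWithZero Γ₀] (v : Valuation K Γ₀) {p : K[X]}
    (hp : ∀ i, v (p.coeff i) ≤ 1) {t : K} (ht : p.eval t = 0) :
    v (p.leadingCoeff * t) ≤ 1 := by
  obtain ⟨q, rfl⟩ : ∃ q : v.integer[X], q.map (algebraMap v.integer K) = p :=
    lifts_iff_coeff_lifts _ |>.2 fun i => ⟨⟨_, hp i⟩, rfl⟩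
  have hq : IsIntegral v.integer (q.leadingCoeff • t) :=
    isIntegral_leadingCoeff_smul q t (by rwa [aeval_def, eval₂_eq_eval_map])
  rw [leadingCoeff_map_of_injective Subtype.val_injective, ← Algebra.smul_def]
  exact (Valuation.integer.integers v).mem_of_integral hq

theorem IsFractionRing.exists_ne_zero_mul_coeff_mem_range {R K : Type*} [CommRing R]
    [Nontrivial R] [CommRing K] [Algebra R K] [IsFractionRing R K] (A : K[X]) :
    ∃ c : R, c ≠ 0 ∧ ∀ i, algebraMap R K c * A.coeff i ∈ Set.range (algebraMap R K) := by
  obtain ⟨c, hc, hcA⟩ := IsLocalization.integerNormalization_spec (nonZeroDivisors R) A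
  refine ⟨c, nonZeroDivisors.ne_zero hc, fun i =>
    ⟨(IsLocalization.integerNormalization (nonZeroDivisors R) A).coeff i, ?_⟩⟩
  rw [← coeff_map, hcA, coeff_smul, Algebra.smul_def]

theorem Set.leadingCoeff_mul_mem_integer_of_eval_eq_zero {R K : Type*} [CommRing R]
    [IsDedekindDomain R] [Field K] [Algebra R K] [IsFractionRing R K] (S : Set (HeightOneSpectrum R))
    {p : K[X]} (hp : ∀ i, p.coeff i ∈ S.integer K) {t : K} (ht : p.eval t = 0) :
    p.leadingCoeff * t ∈ S.integer K := fun v hv =>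
  (v.valuation K).leadingCoeff_mul_le_one_of_eval_eq_zero (fun i => hp i v hv) ht

theorem stmt_14_general (k : Type*) [Field k] [NumberField k]
    (S : Set (HeightOneSpectrum (𝓞 k)))
    (A : k[X]) (hA : 0 < A.natDegree) :
    ∃ δ : k, δ ≠ 0 ∧ ∀ t : k, A.eval t ∈ S.integer k → δ * t ∈ S.integer k := by
  obtain ⟨c, hc0, hcA⟩ := IsFractionRing.exists_ne_zero_mul_coeff_mem_range (R := 𝓞 k) A
  set c' := algebraMap (𝓞 k) k c
  have hc'0 : c' ≠ 0 := (map_ne_zero_iff _ (IsFractionRing.injective (𝓞 k) k)).2 hc0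
  refine ⟨c' * A.leadingCoeff,
    mul_ne_zero hc'0 (leadingCoeff_ne_zero.2 (ne_zero_of_natDegree_gt hA)), fun t ht => ?_⟩
  set p := C c' * A - C (c' * A.eval t)
  have hroot : p.eval t = 0 := by simp [p]
  have hlead : p.leadingCoeff = c' * A.leadingCoeff := by
    rw [leadingCoeff_sub_C_of_natDegree_pos (by rwa [natDegree_C_mul hc'0]), leadingCoeff_mul,
      leadingCoeff_C]
  have hcoeff : ∀ i, p.coeff i ∈ S.integer k := by
    intro i
    obtain ⟨r, hr⟩ := hcA i
    rw [coeff_sub, coeff_C_mul, ← hr, coeff_C]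
    refine sub_mem ((S.integer k).algebraMap_mem r) ?_
    split_ifs
    · exact mul_mem ((S.integer k).algebraMap_mem c) ht
    · exact zero_mem _
  simpa [hlead] using S.leadingCoeff_mul_mem_integer_of_eval_eq_zero hcoeff hroot

theorem stmt_14 (k : Type*) [Field k] [NumberField k]
    (S : Set (HeightOneSpectrum (𝓞 k))) (hS : S.Finite)
    (A : k[X]) (hA : 0 < A.natDegree) :
    ∃ δ : k, δ ≠ 0 ∧ ∀ t : k, A.eval t ∈ S.integer k → δ * t ∈ S.integer k :=
  stmt_14_general k S A hA
end

section
/- (Geometrically reducible plane curves have finitely many rational points.) Let k be a number field and let F be a polynomial in two variables over k (an element of MvPolynomial (Fin 2) k). Suppose F is irreducible in k[X,Y], but its image under the coefficient map to (AlgebraicClosure k)[X,Y] is not irreducible. Then the set of k-rational zeros {p : Fin 2 → k | eval p F = 0} is finite. -/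
/-!
Every `k`-point of `F` lies on some irreducible factor `G` of `F` over `k̄`. If `G` divided all
of its Galois conjugates, a suitable scalar multiple of `G` would be Galois-invariant, hence
defined over `k`, and then so would be the cofactor `F / G`; irreducibility of `F` over `k` would
force `F` to stay irreducible over `k̄`. Hence `G` does not divide some conjugate `σ G`, and every
`k`-point of `G` is also a zero of `σ G`. Two such plane curves meet in finitely many points:
eliminating either variable by a resultant (Gauss's lemma makes it nonzero) puts a nonzero
polynomial in the other variable alone into the ideal `(G, σ G)`.
-/

theorem Polynomial.exists_C_mem_span_pair_of_not_dvd {R : Type*} [CommRing R] [IsDomain R]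
    [IsGCDMonoid R] {g p : Polynomial R} (hg : Irreducible g) (hgp : ¬ g ∣ p) :
    ∃ r : R, r ≠ 0 ∧ C r ∈ Ideal.span {g, p} := by
  by_cases hdeg : g.natDegree = 0
  · obtain ⟨c, rfl⟩ := natDegree_eq_zero.mp hdeg
    exact ⟨c, fun hc => hg.ne_zero (by rw [hc, C_0]), Ideal.subset_span (Set.mem_insert _ _)⟩
  let K := FractionRing R
  have hinj := IsFractionRing.injective R K
  have hprim := hg.isPrimitive hdeg
  have hcop : IsCoprime (g.map (algebraMap R K)) (p.map (algebraMap R K)) :=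
    ((hprim.irreducible_iff_irreducible_map_fraction_map).mp hg).coprime_iff_not_dvd.mpr
      fun h => hgp (hprim.dvd_of_fraction_map_dvd_fraction_map h)
  obtain ⟨a, b, -, -, hab⟩ := exists_mul_add_mul_eq_C_resultant g p le_rfl le_rfl (.inl hdeg)
  refine ⟨g.resultant p, fun h0 => resultant_ne_zero _ _ hcop ?_,
    Ideal.mem_span_pair.mpr ⟨a, b, by rw [← hab]; ring⟩⟩
  rw [natDegree_map_eq_of_injective hinj, natDegree_map_eq_of_injective hinj,
    resultant_map_map, h0, map_zero]

theorem UniqueFactorizationMonoid.exists_mem_factors_map_eq_zero {α β F : Type*}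
    [CommMonoidWithZero α] [UniqueFactorizationMonoid α] [CommMonoidWithZero β]
    [NoZeroDivisors β] [Nontrivial β] [FunLike F α β] [MonoidWithZeroHomClass F α β] (φ : F)
    {a : α} (ha : a ≠ 0) (h : φ a = 0) : ∃ p ∈ factors a, φ p = 0 := by
  have := ((factors_prod ha).map φ).eq_zero_iff.mpr h
  rwa [map_multiset_prod, Multiset.prod_eq_zero_iff, Multiset.mem_map] at this

instance (i : Fin 2) : Unique {j : Fin 2 // j ≠ i} where
  default := ⟨i + 1, by revert i; decide⟩
  uniq := by rintro ⟨j, hj⟩; exact Subtype.ext (by revert i j; decide)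

namespace MvPolynomial

section Elimination

variable {σ D : Type*} [CommRing D] [IsDomain D]

theorem exists_rename_mem_span_pair_of_not_dvd [UniqueFactorizationMonoid D] (i : σ)
    {G P : MvPolynomial σ D} (hG : Irreducible G) (hGP : ¬ G ∣ P) :
    ∃ u : MvPolynomial {j // j ≠ i} D,
      u ≠ 0 ∧ rename Subtype.val u ∈ Ideal.span {G, P} := by
  classical
  let φ := (renameEquiv D (Equiv.optionSubtypeNe i).symm).trans (optionEquivLeft D {j // j ≠ i})
  have hφ (u) : φ (rename Subtype.val u) = Polynomial.C u := by
    induction u using MvPolynomial.induction_on with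
    | C a => simp [φ]
    | add p q hp hq => simp only [map_add, hp, hq]
    | mul_X p j hp =>
      simp only [map_mul, hp, rename_X]
      simp [φ, Equiv.optionSubtypeNe_symm_of_ne j.2]
  let _ := UniqueFactorizationMonoid.toGCDMonoid (MvPolynomial {j // j ≠ i} D)
  obtain ⟨u, hu, hmem⟩ := Polynomial.exists_C_mem_span_pair_of_not_dvd
    (hG.map φ) (fun h => hGP ((map_dvd_iff φ).mp h))
  obtain ⟨a, b, hab⟩ := Ideal.mem_span_pair.mp hmem
  refine ⟨u, hu, Ideal.mem_span_pair.mpr ⟨φ.symm a, φ.symm b, φ.injective ?_⟩⟩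
  simp [hφ, hab]

theorem eval_eq_zero_of_mem_span_pair {R : Type*} [CommSemiring R] {G P Q : MvPolynomial σ R}
    (hQ : Q ∈ Ideal.span {G, P}) {x : σ → R} (hG : eval x G = 0) (hP : eval x P = 0) :
    eval x Q = 0 := by
  obtain ⟨a, b, rfl⟩ := Ideal.mem_span_pair.mp hQ
  simp [hG, hP]

theorem finite_setOf_eval_eq_zero [Unique σ] {u : MvPolynomial σ D} (hu : u ≠ 0) :
    {x : σ → D | eval x u = 0}.Finite := by
  have hq : uniqueAlgEquiv D σ u ≠ 0 := (map_ne_zero_iff _ (AlgEquiv.injective _)).mpr hu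
  refine ((Polynomial.finite_setOfPred_isRoot hq).image fun a (_ : σ) => a).subset fun x hx => ?_
  refine ⟨x default, ?_, ?_⟩
  · change Polynomial.eval₂ (RingHom.id D) (x default) _ = 0
    rwa [eval₂_uniqueAlgEquiv]
  · funext j
    rw [Unique.eq_default j]

theorem finite_setOf_eval_eq_zero_and_eval_eq_zero [UniqueFactorizationMonoid D]
    {G P : MvPolynomial (Fin 2) D} (hG : Irreducible G) (hGP : ¬ G ∣ P) :
    {x : Fin 2 → D | eval x G = 0 ∧ eval x P = 0}.Finite := by
  choose u hu hmem using fun i => exists_rename_mem_span_pair_of_not_dvd i hG hGP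
  let restrict (x : Fin 2 → D) (i : Fin 2) (j : {j // j ≠ i}) : D := x j
  have hinj : Function.Injective restrict := by
    intro x y h
    funext j
    have hj : j ≠ j + 1 := by revert j; decide
    exact congrFun (congrFun h (j + 1)) ⟨j, hj⟩
  refine ((Set.Finite.pi fun i => finite_setOf_eval_eq_zero (hu i)).preimage hinj.injOn).subset ?_
  rintro x ⟨hxG, hxP⟩ i -
  simpa [restrict, eval_rename, Function.comp_def] using
    eval_eq_zero_of_mem_span_pair (hmem i) hxG hxP

theorem eq_of_associated_of_coeff_eq {p q : MvPolynomial σ D} (h : Associated p q)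
    {m : σ →₀ ℕ} (hm : coeff m p = coeff m q) (h0 : coeff m p ≠ 0) : p = q := by
  obtain ⟨u, rfl⟩ := h
  obtain ⟨r, -, hr⟩ := isUnit_iff_eq_C_of_isReduced.mp u.isUnit
  rw [hr, mul_comm, coeff_C_mul] at hm
  rw [hr, (right_eq_mul₀ h0).mp hm, C_1, mul_one]

end Elimination

section Galois

variable {ι k K : Type*} [Field k] [Field K] [Algebra k K]

theorem map_galois_map_algebraMap (f : Gal(K/k)) (F : MvPolynomial ι k) :
    map (f : K →+* K) (map (algebraMap k K) F) = map (algebraMap k K) F := by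
  rw [map_map, show (f : K →+* K).comp (algebraMap k K) = algebraMap k K from
    RingHom.ext f.commutes]

theorem eval_map_galois (f : Gal(K/k)) (G : MvPolynomial ι K) (x : ι → k) :
    eval (algebraMap k K ∘ x) (map (f : K →+* K) G) = f (eval (algebraMap k K ∘ x) G) := by
  rw [eval_map, eval, coe_eval₂Hom]
  change _ = (f : K →+* K) _
  rw [eval₂_comp_left, RingHom.comp_id]
  congr 1
  funext i
  exact (f.commutes _).symm

theorem mem_range_map_algebraMap_of_forall_map_eq [IsGalois k K] {P : MvPolynomial ι K}
    (hP : ∀ f : Gal(K/k), map (f : K →+* K) P = P) :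
    P ∈ Set.range (map (algebraMap k K)) := by
  rw [mem_range_map_iff_coeffs_subset]
  intro c hc
  obtain ⟨m, -, rfl⟩ := mem_coeffs_iff.mp hc
  refine (InfiniteGalois.mem_range_algebraMap_iff_fixed _).mpr fun f => ?_
  have := congrArg (coeff m) (hP f)
  rwa [coeff_map] at this

theorem associated_map_of_forall_dvd_map {G : MvPolynomial ι K}
    (h : ∀ f : Gal(K/k), G ∣ map (f : K →+* K) G) (f : Gal(K/k)) :
    Associated G (map (f : K →+* K) G) := by
  refine associated_of_dvd_dvd (h f) ?_
  have := map_dvd (map (f : K →+* K)) (h f.symm)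
  rwa [map_map, show (f : K →+* K).comp (f.symm : K →+* K) = RingHom.id K from
    RingHom.ext f.apply_symm_apply, map_id] at this

theorem exists_associated_forall_map_eq {G : MvPolynomial ι K} (hG : G ≠ 0)
    (h : ∀ f : Gal(K/k), G ∣ map (f : K →+* K) G) :
    ∃ G', Associated G G' ∧ ∀ f : Gal(K/k), map (f : K →+* K) G' = G' := by
  obtain ⟨m, hm⟩ := support_nonempty.mpr hG
  have hc : coeff m G ≠ 0 := mem_support_iff.mp hm
  set G' := C (coeff m G)⁻¹ * G
  have hGG' : Associated G G' :=
    (associated_unit_mul_left G _ ((isUnit_iff_ne_zero.mpr (inv_ne_zero hc)).map C)).symm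
  have hG'1 : coeff m G' = 1 := by rw [coeff_C_mul, inv_mul_cancel₀ hc]
  have hfG'1 (f : Gal(K/k)) : coeff m (map (f : K →+* K) G') = 1 := by
    rw [coeff_map, hG'1, map_one]
  refine ⟨G', hGG', fun f => eq_of_associated_of_coeff_eq ?_ ((hfG'1 f).trans hG'1.symm)
    ((hfG'1 f).symm ▸ one_ne_zero)⟩
  exact ((hGG'.map (map (f : K →+* K))).symm.trans
    (associated_map_of_forall_dvd_map h f).symm).trans hGG'

theorem exists_not_dvd_map_of_not_irreducible_map [IsGalois k K] {F : MvPolynomial ι k}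
    (hF : Irreducible F) (hgeo : ¬ Irreducible (map (algebraMap k K) F))
    {G : MvPolynomial ι K} (hG : Irreducible G) (hGF : G ∣ map (algebraMap k K) F) :
    ∃ f : Gal(K/k), ¬ G ∣ map (f : K →+* K) G := by
  by_contra! hconj
  obtain ⟨G', hGG', hG'fix⟩ := exists_associated_forall_map_eq hG.ne_zero hconj
  replace hG := hGG'.irreducible hG
  obtain ⟨H, hH⟩ := hGG'.symm.dvd.trans hGF
  have hHfix (f : Gal(K/k)) : map (f : K →+* K) H = H := by
    have := congrArg (map (f : K →+* K)) hH
    rw [map_galois_map_algebraMap, map_mul, hG'fix, hH] at this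
    exact (mul_left_cancel₀ hG.ne_zero this).symm
  obtain ⟨G₀, rfl⟩ := mem_range_map_algebraMap_of_forall_map_eq hG'fix
  obtain ⟨H₀, rfl⟩ := mem_range_map_algebraMap_of_forall_map_eq hHfix
  have hFGH : F = G₀ * H₀ := map_injective _ (algebraMap k K).injective (by rw [hH, map_mul])
  rcases hF.isUnit_or_isUnit hFGH with hu | hu
  · exact hG.not_isUnit (hu.map _)
  · exact hgeo (hH ▸ (irreducible_mul_isUnit (hu.map _)).mpr hG)

theorem finite_setOf_eval_algebraMap_eq_zero {G : MvPolynomial (Fin 2) K} (hG : Irreducible G)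
    {f : Gal(K/k)} (hf : ¬ G ∣ map (f : K →+* K) G) :
    {x : Fin 2 → k | eval (algebraMap k K ∘ x) G = 0}.Finite :=
  ((finite_setOf_eval_eq_zero_and_eval_eq_zero hG hf).preimage
    (algebraMap k K).injective.comp_left.injOn).subset fun x hx =>
      ⟨hx, (eval_map_galois f G x).trans ((congrArg f hx).trans (map_zero f))⟩

end Galois

end MvPolynomial

open MvPolynomial

theorem stmt_15 (k : Type*) [Field k] [NumberField k]
    (F : MvPolynomial (Fin 2) k) (hF : Irreducible F)
    (hgeo : ¬ Irreducible (MvPolynomial.map (algebraMap k (AlgebraicClosure k)) F)) :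
    {p : Fin 2 → k | MvPolynomial.eval p F = 0}.Finite := by
  classical
  set F' := map (algebraMap k (AlgebraicClosure k)) F
  have hF' : F' ≠ 0 :=
    (map_ne_zero_iff _ (map_injective _ (algebraMap k _).injective)).mpr hF.ne_zero
  refine (Set.Finite.biUnion (t := fun G => {p : Fin 2 → k | eval (algebraMap k _ ∘ p) G = 0})
    (UniqueFactorizationMonoid.factors F').toFinset.finite_toSet fun G hG => ?_).subset
      fun p hp => ?_
  · rw [Finset.mem_coe, Multiset.mem_toFinset] at hG
    have hGirr := UniqueFactorizationMonoid.irreducible_of_factor G hG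
    obtain ⟨f, hf⟩ := exists_not_dvd_map_of_not_irreducible_map hF hgeo hGirr
      (UniqueFactorizationMonoid.dvd_of_mem_factors hG)
    exact finite_setOf_eval_algebraMap_eq_zero hGirr hf
  · have hp' : eval (algebraMap k _ ∘ p) F' = 0 := by
      rw [← map_eval, (hp : eval p F = 0), map_zero]
    obtain ⟨G, hG, hG0⟩ :=
      UniqueFactorizationMonoid.exists_mem_factors_map_eq_zero (eval (algebraMap k _ ∘ p)) hF' hp'
    exact Set.mem_biUnion (by simpa using hG) hG0
end

section
/- (Explicit exceptional set for polynomial multiplicity.) Let K be a field and let f, g ∈ K[x] be nonconstant. View f(X) − g(Y) as the element P = C f − g.map C of (K[X])[Y]. Suppose P = C (C c) * (∏_{i=1}^{s} (Y − C hᵢ)) * (∏_{j=1}^{m} Fⱼ), where c ∈ K is nonzero, h₁,…,h_s ∈ K[X] are pairwise distinct, and F₁,…,F_m ∈ (K[X])[Y] are irreducible, pairwise non-associated, each of Y-degree at least 2. Then there is a finite subset Z ⊆ K such that for every x ∈ K \ Z, the set {y ∈ K : g.eval y = f.eval x} is finite of cardinality s + ∑_{j=1}^{m} (number of y ∈ K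 with (Fⱼ specialized at X := x).eval y = 0), where the specialization of Fⱼ at X := x is obtained by applying the evaluation homomorphism K[X] → K at x to the coefficients of Fⱼ. -/
/-!
Specialising `X := x` turns `f(X) - g(Y)` into `f(x) - g(Y) = c ∏ (Y - hᵢ(x)) ∏ Fⱼ(x, Y)`, so the
fibre of `g` over `f(x)` is the union of the root sets of the specialised factors. These factors
are pairwise non-associated irreducibles of positive `Y`-degree in `K[X][Y]`, so by Gauss's lemma
each pair has a nonzero resultant in `K[X]`, and that resultant is a `K[X][Y]`-combination of the
pair. Away from the finitely many roots of the product of these resultants the specialised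
factors therefore have pairwise no common root, and the number of solutions is additive over the
factors; each linear factor `Y - hᵢ(x)` contributes exactly one.
-/

open Polynomial Function

namespace Polynomial

section Resultant

variable {R : Type*} [CommRing R]

/-- Over the fraction field, Gauss's lemma makes `P` and `Q` coprime. -/
theorem resultant_ne_zero_of_irreducible_of_not_associated [IsDomain R] [IsGCDMonoid R]
    {P Q : R[X]} (hP : Irreducible P) (hQ : Irreducible Q) (hP0 : P.natDegree ≠ 0)
    (hPQ : ¬Associated P Q) : resultant P Q ≠ 0 := by
  let L := FractionRing R
  have hinj : Injective (algebraMap R L) := IsFractionRing.injective R L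
  have hprim := hP.isPrimitive hP0
  have hcop : IsCoprime (P.map (algebraMap R L)) (Q.map (algebraMap R L)) := by
    refine (hprim.irreducible_iff_irreducible_map_fraction_map.mp hP).coprime_iff_not_dvd.mpr ?_
    exact fun hdvd =>
      hPQ (hP.associated_of_dvd hQ (hprim.dvd_of_fraction_map_dvd_fraction_map hdvd))
  have hres := resultant_ne_zero _ _ hcop
  rw [natDegree_map_eq_of_injective hinj, natDegree_map_eq_of_injective hinj,
    resultant_map_map] at hres
  exact fun h0 => hres (by rw [h0, map_zero])

theorem map_resultant_eq_zero_of_isRoot {S : Type*} [CommRing S] {P Q : R[X]}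
    (hP0 : P.natDegree ≠ 0) (φ : R →+* S) {y : S} (hP : (P.map φ).IsRoot y)
    (hQ : (Q.map φ).IsRoot y) : φ (resultant P Q) = 0 := by
  obtain ⟨a, b, -, -, hab⟩ := exists_mul_add_mul_eq_C_resultant P Q le_rfl le_rfl (.inl hP0)
  have hy := congrArg (fun p => (p.map φ).eval y) hab
  simp only [Polynomial.map_add, Polynomial.map_mul, eval_add, eval_mul, hP.eq_zero, hQ.eq_zero,
    zero_mul, add_zero, map_C, eval_C] at hy
  exact hy.symm

theorem exists_ne_zero_pairwise_disjoint_roots_map [IsDomain R] [IsGCDMonoid R] {ι : Type*}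
    [Fintype ι] {Φ : ι → R[X]} (hirr : ∀ i, Irreducible (Φ i)) (hdeg : ∀ i, (Φ i).natDegree ≠ 0)
    (hΦ : Pairwise fun i j => ¬Associated (Φ i) (Φ j)) (S : Type*) [CommRing S] :
    ∃ d : R, d ≠ 0 ∧ ∀ φ : R →+* S, φ d ≠ 0 →
      Pairwise (Disjoint on fun i => {y | ((Φ i).map φ).eval y = 0}) := by
  classical
  refine ⟨∏ p ∈ Finset.univ.offDiag, resultant (Φ p.1) (Φ p.2), ?_, fun φ hφ i j hij => ?_⟩
  · refine Finset.prod_ne_zero_iff.mpr fun p hp => ?_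
    obtain ⟨-, -, hp⟩ := Finset.mem_offDiag.mp hp
    exact resultant_ne_zero_of_irreducible_of_not_associated (hirr _) (hirr _) (hdeg _) (hΦ hp)
  · refine Set.disjoint_left.mpr fun y hi hj => hφ ?_
    rw [map_prod]
    exact Finset.prod_eq_zero (i := (i, j)) (by simpa using hij)
      (map_resultant_eq_zero_of_isRoot (hdeg i) φ hi hj)

end Resultant

theorem ncard_setOf_eval_prod_eq_zero {R ι : Type*} [CommRing R] [IsDomain R] [Fintype ι]
    {p : ι → R[X]} (hp : ∏ i, p i ≠ 0)
    (hdisj : Pairwise (Disjoint on fun i => {y | (p i).eval y = 0})) :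
    {y | (∏ i, p i).eval y = 0}.ncard = ∑ i, {y | (p i).eval y = 0}.ncard := by
  have hunion : {y | (∏ i, p i).eval y = 0} = ⋃ i, {y | (p i).eval y = 0} := by
    ext y
    simp [eval_prod, Finset.prod_eq_zero_iff]
  have hfin (i : ι) : {y | (p i).eval y = 0}.Finite :=
    finite_setOfPred_isRoot (Finset.prod_ne_zero_iff.mp hp i (Finset.mem_univ i))
  rw [hunion, Set.ncard_iUnion_of_finite hfin hdisj, finsum_eq_sum_of_fintype]

theorem pairwise_not_associated_sumElim_X_sub_C {R α β : Type*} [CommRing R] [IsDomain R]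
    {a : α → R} (ha : Injective a) {F : β → R[X]}
    (hF : Pairwise fun i j => ¬Associated (F i) (F j)) (hFdeg : ∀ j, (F j).natDegree ≠ 1) :
    Pairwise fun k l => ¬Associated (Sum.elim (fun i => X - C (a i)) F k)
      (Sum.elim (fun i => X - C (a i)) F l) := by
  have hlin : ∀ i j, ¬Associated (X - C (a i)) (F j) := fun i j hij =>
    hFdeg j (by rw [← natDegree_eq_of_degree_eq (degree_eq_degree_of_associated hij),
      natDegree_X_sub_C])
  rintro (i | j) (i' | j') hne hassoc
  · exact hne (congrArg Sum.inl (ha (C_inj.mp (sub_right_inj.mp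
      (eq_of_monic_of_associated (monic_X_sub_C _) (monic_X_sub_C _) hassoc)))))
  · exact hlin i j' hassoc
  · exact hlin i' j hassoc.symm
  · exact hF (fun h => hne (congrArg Sum.inr h)) hassoc

theorem map_evalRingHom_C_sub_map_C {K : Type*} [CommRing K] (f g : K[X]) (x : K) :
    (C f - g.map C).map (evalRingHom x) = C (f.eval x) - g := by
  rw [Polynomial.map_sub, map_C, map_map]
  have : (evalRingHom x).comp C = RingHom.id K := by ext; simp
  simp [this]

end Polynomial

theorem stmt_16_general (K : Type*) [Field K] (f g : K[X])
    (hg : 0 < g.natDegree)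
    (c : K) (hc : c ≠ 0) (s m : ℕ)
    (h : Fin s → K[X]) (hinj : Function.Injective h)
    (F : Fin m → Polynomial K[X])
    (hFirr : ∀ j, Irreducible (F j))
    (hFassoc : ∀ j j', j ≠ j' → ¬ Associated (F j) (F j'))
    (hFdeg : ∀ j, 2 ≤ (F j).natDegree)
    (hfact : C f - g.map C =
      C (C c) * (∏ i : Fin s, (X - C (h i))) * ∏ j : Fin m, F j) :
    ∃ Z : Set K, Z.Finite ∧ ∀ x : K, x ∉ Z →
      {y : K | g.eval y = f.eval x}.Finite ∧
      {y : K | g.eval y = f.eval x}.ncard =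
        s + ∑ j : Fin m, {y : K | ((F j).map (evalRingHom x)).eval y = 0}.ncard := by
  set Φ : Fin s ⊕ Fin m → K[X][X] := Sum.elim (fun i => X - C (h i)) F
  obtain ⟨d, hd0, hdisj⟩ := exists_ne_zero_pairwise_disjoint_roots_map (Φ := Φ)
    (by rintro (i | j); exacts [irreducible_X_sub_C _, hFirr j])
    (by rintro (i | j); exacts [(natDegree_X_sub_C (h i)).trans_ne one_ne_zero,
      (zero_lt_two.trans_le (hFdeg j)).ne'])
    (pairwise_not_associated_sumElim_X_sub_C hinj hFassoc
      fun j => (one_lt_two.trans_le (hFdeg j)).ne') K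
  refine ⟨{x | d.eval x = 0}, finite_setOfPred_isRoot hd0, fun x hx => ?_⟩
  have hspec : C (f.eval x) - g = C c * ∏ k, (Φ k).map (evalRingHom x) := by
    rw [← map_evalRingHom_C_sub_map_C, hfact, Fintype.prod_sum_type]
    simp only [Polynomial.map_mul, Polynomial.map_prod, map_C, coe_evalRingHom, eval_C, Φ,
      Sum.elim_inl, Sum.elim_inr, mul_assoc]
  have hne : C (f.eval x) - g ≠ 0 := fun h0 => by
    simp [← sub_eq_zero.mp h0] at hg
  have hfiber :
      {y | g.eval y = f.eval x} = {y | (∏ k, (Φ k).map (evalRingHom x)).eval y = 0} := by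
    ext y
    have : g.eval y = f.eval x ↔ (C (f.eval x) - g).eval y = 0 := by
      rw [eval_sub, eval_C, sub_eq_zero, eq_comm]
    simp only [Set.mem_ofPred_eq, this, hspec, eval_mul, eval_C, mul_eq_zero, hc, false_or]
  have hprod : ∏ k, (Φ k).map (evalRingHom x) ≠ 0 := fun h0 => hne (by rw [hspec, h0, mul_zero])
  refine ⟨hfiber ▸ finite_setOfPred_isRoot hprod, ?_⟩
  rw [hfiber, ncard_setOf_eval_prod_eq_zero hprod (hdisj _ hx), Fintype.sum_sum_type]
  simp [Φ, sub_eq_zero]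

theorem stmt_16 (K : Type*) [Field K] (f g : K[X])
    (hf : 0 < f.natDegree) (hg : 0 < g.natDegree)
    (c : K) (hc : c ≠ 0) (s m : ℕ)
    (h : Fin s → K[X]) (hinj : Function.Injective h)
    (F : Fin m → Polynomial K[X])
    (hFirr : ∀ j, Irreducible (F j))
    (hFassoc : ∀ j j', j ≠ j' → ¬ Associated (F j) (F j'))
    (hFdeg : ∀ j, 2 ≤ (F j).natDegree)
    (hfact : C f - g.map C =
      C (C c) * (∏ i : Fin s, (X - C (h i))) * ∏ j : Fin m, F j) :
    ∃ Z : Set K, Z.Finite ∧ ∀ x : K, x ∉ Z →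
      {y : K | g.eval y = f.eval x}.Finite ∧
      {y : K | g.eval y = f.eval x}.ncard =
        s + ∑ j : Fin m, {y : K | ((F j).map (evalRingHom x)).eval y = 0}.ncard :=
  stmt_16_general K f g hg c hc s m h hinj F hFirr hFassoc hFdeg hfact
end
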